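/- arXiv:2212.12491 — 4 statements merged into one kernel-verified Lean document; each statement's English description precedes it below -/
import Mathlib

section
/- There exists a positive constant C, depending only on n and a, such that for all x ∈ ℝⁿ and all r > 0, ∫_{B(x,r)} |y₁|^a dy ≥ C r^{n+a}. (One may take C = ω_{n−1} B((a+1)/2,(n+1)/2), where ω_{n−1} is the volume of the unit ball in ℝ^{n−1} and B(·,·) is the beta function.) -/
open MeasureTheory Metric

set_option maxHeartbeats 1000000

lemma coord_le_norm {n : ℕ} (y : EuclideanSpace ℝ (Fin n)) (i : Fin n) : |y i| ≤ ‖y‖ := by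
  rw [EuclideanSpace.norm_eq]
  have h1 : |y i| = Real.sqrt (‖y i‖ ^ 2) := by
    rw [Real.sqrt_sq_eq_abs]; simp [Real.norm_eq_abs]
  rw [h1]
  apply Real.sqrt_le_sqrt
  exact Finset.single_le_sum (f := fun j => ‖y j‖ ^ 2) (fun j _ => sq_nonneg _)
    (Finset.mem_univ i)

/-- Lemma 2.1(i), lower bound: for `w(x) = |x₁|^a` with `0 ≤ a < 1`, there is a constant
`C > 0` depending only on `n` and `a` such that `∫_{B(x,r)} |y₁|^a dy ≥ C r^{n+a}`
for all `x ∈ ℝⁿ` and `r > 0`. -/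
theorem stmt_0 (n : ℕ) (hn : 0 < n) (a : ℝ) (ha0 : 0 ≤ a) (ha1 : a < 1) :
    ∃ C : ℝ, 0 < C ∧ ∀ (x : EuclideanSpace ℝ (Fin n)) (r : ℝ), 0 < r →
      C * r ^ ((n : ℝ) + a) ≤ ∫ y in ball x r, |y ⟨0, hn⟩| ^ a := by
  haveI : Nonempty (Fin n) := ⟨⟨0, hn⟩⟩
  set i : Fin n := ⟨0, hn⟩
  set V : ℝ := (volume (ball (0 : EuclideanSpace ℝ (Fin n)) 1)).toReal with hV
  have hVpos : 0 < V := by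
    apply ENNReal.toReal_pos
    · exact (measure_ball_pos volume 0 one_pos).ne'
    · exact measure_ball_lt_top.ne
  have h4 : (0:ℝ) < 4 ^ ((n:ℝ) + a) := Real.rpow_pos_of_pos (by norm_num) _
  refine ⟨V / 4 ^ ((n:ℝ) + a), div_pos hVpos h4, fun x r hr => ?_⟩
  -- choose a shifted center z with |z i| ≥ 3r/4 and ball z (r/4) ⊆ ball x r
  set s : ℝ := if 0 ≤ x i then 1 else -1 with hs
  set z : EuclideanSpace ℝ (Fin n) := x + (3 * r / 4 * s) • EuclideanSpace.single i 1 with hz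
  have hzi : z i = x i + 3 * r / 4 * s := by
    simp [hz, EuclideanSpace.single_apply]
  have habs : 3 * r / 4 ≤ |z i| := by
    rw [hzi, hs]
    split_ifs with h
    · rw [abs_of_nonneg (by linarith)]; linarith
    · rw [abs_of_nonpos (by push_neg at h; linarith)]; push_neg at h; linarith
  have hsub : ball z (r / 4) ⊆ ball x r := by
    intro y hy
    rw [mem_ball] at hy ⊢
    have hd : dist z x = 3 * r / 4 := by
      rw [hz, dist_self_add_left, norm_smul, EuclideanSpace.norm_single]
      rw [norm_one, mul_one, Real.norm_eq_abs, abs_mul, hs]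
      split_ifs with h
      · simp [abs_of_nonneg (by linarith : (0:ℝ) ≤ 3 * r / 4)]
      · simp [abs_of_nonneg (by linarith : (0:ℝ) ≤ 3 * r / 4)]
    calc dist y x ≤ dist y z + dist z x := dist_triangle y z x
      _ < r / 4 + 3 * r / 4 := by rw [hd]; linarith
      _ = r := by ring
  -- on ball z (r/4), |y i| ≥ r/2
  have hlow : ∀ y ∈ ball z (r / 4), r / 2 ≤ |y i| := by
    intro y hy
    rw [mem_ball] at hy
    have h1 : |y i - z i| ≤ dist y z := by
      have := coord_le_norm (y - z) i
      simpa [dist_eq_norm] using this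
    have h2 : |z i| - |y i| ≤ |y i - z i| := by
      have := abs_sub_abs_le_abs_sub (z i) (y i)
      rw [abs_sub_comm] at this
      linarith
    linarith
  -- integrability of the weight on the big ball
  have hcont : Continuous fun y : EuclideanSpace ℝ (Fin n) => |y i| ^ a :=
    (Real.continuous_rpow_const ha0).comp
      (continuous_abs.comp (EuclideanSpace.proj (𝕜 := ℝ) i).continuous)
  have hmeas : AEStronglyMeasurable (fun y : EuclideanSpace ℝ (Fin n) => |y i| ^ a)
      (volume.restrict (ball x r)) := hcont.aestronglyMeasurable
  have hint : IntegrableOn (fun y : EuclideanSpace ℝ (Fin n) => |y i| ^ a) (ball x r) :=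
    (hcont.continuousOn.integrableOn_compact (isCompact_closedBall x r)).mono_set
      ball_subset_closedBall
  have hnonneg : ∀ y : EuclideanSpace ℝ (Fin n), 0 ≤ |y i| ^ a :=
    fun y => Real.rpow_nonneg (abs_nonneg _) a
  -- lower bound chain
  have step1 : ∫ y in ball z (r / 4), |y i| ^ a ≤ ∫ y in ball x r, |y i| ^ a := by
    apply setIntegral_mono_set hint
    · exact Filter.Eventually.of_forall fun y => hnonneg y
    · exact HasSubset.Subset.eventuallyLE hsub
  have step2 : (r / 4) ^ a * (volume (ball z (r / 4))).toReal
      ≤ ∫ y in ball z (r / 4), |y i| ^ a := by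
    have := setIntegral_mono_on (integrableOn_const measure_ball_lt_top.ne)
      (hint.mono_set hsub) measurableSet_ball
      (g := fun y : EuclideanSpace ℝ (Fin n) => |y i| ^ a)
      (f := fun _ => (r / 4) ^ a)
      (fun y hy => by
        calc (r / 4) ^ a ≤ (r / 2) ^ a := by
              apply Real.rpow_le_rpow (by linarith) (by linarith) ha0
          _ ≤ |y i| ^ a := Real.rpow_le_rpow (by linarith) (hlow y hy) ha0)
    rw [setIntegral_const, smul_eq_mul, mul_comm] at this
    exact this
  have hvol : (volume (ball z (r / 4))).toReal = (r / 4) ^ n * V := by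
    rw [Measure.addHaar_ball volume z (by linarith : (0:ℝ) ≤ r / 4)]
    rw [ENNReal.toReal_mul, ENNReal.toReal_ofReal (by positivity), finrank_euclideanSpace]
    simp [hV]
  have key : V / 4 ^ ((n:ℝ) + a) * r ^ ((n:ℝ) + a)
      = (r / 4) ^ a * ((r / 4) ^ n * V) := by
    have h4pos : (0:ℝ) < 4 := by norm_num
    rw [Real.rpow_add hr, Real.rpow_add h4pos, Real.rpow_natCast, Real.rpow_natCast,
      Real.div_rpow hr.le h4pos.le, div_pow]
    field_simp
  calc V / 4 ^ ((n:ℝ) + a) * r ^ ((n:ℝ) + a)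
      = (r / 4) ^ a * ((r / 4) ^ n * V) := key
    _ = (r / 4) ^ a * (volume (ball z (r / 4))).toReal := by rw [hvol]
    _ ≤ ∫ y in ball z (r / 4), |y i| ^ a := step2
    _ ≤ ∫ y in ball x r, |y i| ^ a := step1
end

section
/- For all x ∈ ℝⁿ and all r > 0, ∫_{B(x,r)} |y|^b dy ≥ (n ω_n/(n+b)) r^{n+b}, where ω_n is the volume of the unit ball in ℝⁿ; in particular there exists a positive constant C depending only on n and b with ∫_{B(x,r)} |y|^b dy ≥ C r^{n+b}. -/
open MeasureTheory Metric Set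

private lemma stmt2_integrable (n : ℕ) (b : ℝ) (hb0 : 0 ≤ b)
    (x : EuclideanSpace ℝ (Fin n)) (r : ℝ) :
    IntegrableOn (fun y : EuclideanSpace ℝ (Fin n) => ‖y‖ ^ b) (ball x r) := by
  have hc : Continuous fun y : EuclideanSpace ℝ (Fin n) => ‖y‖ ^ b :=
    continuous_norm.rpow_const (fun y => Or.inr hb0)
  exact (hc.continuousOn.integrableOn_compact (isCompact_closedBall x r)).mono_set
    ball_subset_closedBall

private lemma stmt2_center (n : ℕ) (hn : 0 < n) (b : ℝ) (hb0 : 0 ≤ b)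
    (r : ℝ) (hr : 0 < r) :
    ∫ y in ball (0 : EuclideanSpace ℝ (Fin n)) r, ‖y‖ ^ b =
      (n : ℝ) * (volume (ball (0 : EuclideanSpace ℝ (Fin n)) 1)).toReal / ((n : ℝ) + b) *
        r ^ ((n : ℝ) + b) := by
  haveI : Nonempty (Fin n) := ⟨⟨0, hn⟩⟩
  haveI : Nontrivial (EuclideanSpace ℝ (Fin n)) := inferInstance
  set f : ℝ → ℝ := Set.indicator (Set.Ico (0:ℝ) r) (fun t => t ^ b) with hf
  have h1 : ∀ y : EuclideanSpace ℝ (Fin n),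
      Set.indicator (ball (0 : EuclideanSpace ℝ (Fin n)) r) (fun y => ‖y‖ ^ b) y = f ‖y‖ := by
    intro y
    by_cases hy : y ∈ ball (0 : EuclideanSpace ℝ (Fin n)) r
    · rw [Set.indicator_of_mem hy, hf,
        Set.indicator_of_mem (by simpa [Set.mem_Ico, norm_nonneg] using mem_ball_zero_iff.1 hy)]
    · rw [Set.indicator_of_notMem hy, hf, Set.indicator_of_notMem]
      simp only [Set.mem_Ico, norm_nonneg, true_and, not_lt]
      exact not_lt.1 fun h => hy (mem_ball_zero_iff.2 h)
  have h2 : ∫ y in ball (0 : EuclideanSpace ℝ (Fin n)) r, ‖y‖ ^ b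
      = ∫ y : EuclideanSpace ℝ (Fin n), f ‖y‖ := by
    rw [← integral_indicator measurableSet_ball]
    exact integral_congr_ae (Filter.Eventually.of_forall h1)
  rw [h2, integral_fun_norm_addHaar volume f]
  have hdim : Module.finrank ℝ (EuclideanSpace ℝ (Fin n)) = n := finrank_euclideanSpace_fin
  rw [hdim]
  have h3 : ∫ y in Ioi (0:ℝ), y ^ (n - 1) • f y = ∫ y in Ioo (0:ℝ) r, y ^ ((n:ℝ) - 1 + b) := by
    have heq : Set.EqOn (fun y : ℝ => y ^ (n - 1) • f y)
        (Set.indicator (Ioo (0:ℝ) r) (fun y => y ^ ((n:ℝ) - 1 + b))) (Ioi (0:ℝ)) := by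
      intro y hy
      have hy0 : (0:ℝ) < y := hy
      by_cases hyr : y < r
      · have hmem1 : y ∈ Set.Ico (0:ℝ) r := ⟨hy0.le, hyr⟩
        have hmem2 : y ∈ Set.Ioo (0:ℝ) r := ⟨hy0, hyr⟩
        rw [hf]
        simp only
        rw [Set.indicator_of_mem hmem1, Set.indicator_of_mem hmem2,
          smul_eq_mul, ← Real.rpow_natCast y (n-1), ← Real.rpow_add hy0]
        congr 1
        rw [Nat.cast_sub hn]
        norm_num
      · have hmem1 : y ∉ Set.Ico (0:ℝ) r := by simp [hyr]
        have hmem2 : y ∉ Set.Ioo (0:ℝ) r := by simp [hyr]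
        rw [hf]
        simp only
        rw [Set.indicator_of_notMem hmem1, Set.indicator_of_notMem hmem2, smul_zero]
    rw [setIntegral_congr_fun measurableSet_Ioi heq, setIntegral_indicator measurableSet_Ioo,
      Set.inter_eq_self_of_subset_right Set.Ioo_subset_Ioi_self]
  rw [h3]
  have hexp : (-1 : ℝ) < (n:ℝ) - 1 + b := by
    have : (1:ℝ) ≤ n := by exact_mod_cast hn
    linarith
  have h4 : ∫ y in Ioo (0:ℝ) r, y ^ ((n:ℝ) - 1 + b) = r ^ ((n:ℝ) + b) / ((n:ℝ) + b) := by
    rw [← integral_Ioc_eq_integral_Ioo, ← intervalIntegral.integral_of_le hr.le,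
      integral_rpow (Or.inl hexp), Real.zero_rpow (by linarith), sub_zero]
    congr 1 <;> ring
  rw [h4, nsmul_eq_mul, smul_eq_mul, measureReal_def]
  ring

private lemma stmt2_mono (n : ℕ) (b : ℝ) (hb0 : 0 ≤ b)
    (x : EuclideanSpace ℝ (Fin n)) (r : ℝ) (hr : 0 < r) :
    ∫ y in ball (0 : EuclideanSpace ℝ (Fin n)) r, ‖y‖ ^ b ≤ ∫ y in ball x r, ‖y‖ ^ b := by
  set s := ball x r with hs_def
  set t := ball (0 : EuclideanSpace ℝ (Fin n)) r with ht_def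
  have hs : MeasurableSet s := measurableSet_ball
  have ht : MeasurableSet t := measurableSet_ball
  have hfin_s : volume s ≠ ⊤ := measure_ball_lt_top.ne
  have hfin_t : volume t ≠ ⊤ := measure_ball_lt_top.ne
  have hvol : volume s = volume t := Measure.addHaar_ball_center volume x r
  have hvol_diff : volume (s \ t) = volume (t \ s) := by
    have h1 : volume (s \ t) = volume s - volume (s ∩ t) := by
      rw [show s \ t = s \ (s ∩ t) from Set.diff_self_inter.symm]
      exact measure_diff Set.inter_subset_left (hs.inter ht).nullMeasurableSet
        (ne_top_of_le_ne_top hfin_s (measure_mono Set.inter_subset_left))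
    have h2 : volume (t \ s) = volume t - volume (s ∩ t) := by
      rw [show t \ s = t \ (s ∩ t) from by rw [Set.inter_comm]; exact Set.diff_self_inter.symm]
      exact measure_diff (Set.inter_comm t s ▸ Set.inter_subset_left) (hs.inter ht).nullMeasurableSet
        (ne_top_of_le_ne_top hfin_s (measure_mono Set.inter_subset_left))
    rw [h1, h2, hvol]
  have hint_s : IntegrableOn (fun y : EuclideanSpace ℝ (Fin n) => ‖y‖ ^ b) s :=
    stmt2_integrable n b hb0 x r
  have hint_t : IntegrableOn (fun y : EuclideanSpace ℝ (Fin n) => ‖y‖ ^ b) t :=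
    stmt2_integrable n b hb0 0 r
  have hA : r ^ b * (volume (s \ t)).toReal ≤ ∫ y in s \ t, ‖y‖ ^ b := by
    refine setIntegral_ge_of_const_le_real (hs.diff ht)
      (ne_top_of_le_ne_top hfin_s (measure_mono Set.diff_subset)) (fun y hy => ?_)
      (hint_s.mono_set Set.diff_subset)
    have : r ≤ ‖y‖ := by
      have := hy.2
      rw [ht_def, mem_ball_zero_iff] at this
      exact not_lt.1 this
    exact Real.rpow_le_rpow hr.le this hb0
  have hB : ∫ y in t \ s, ‖y‖ ^ b ≤ r ^ b * (volume (t \ s)).toReal := by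
    calc ∫ y in t \ s, ‖y‖ ^ b ≤ ∫ _ in t \ s, r ^ b := by
          refine setIntegral_mono_on (hint_t.mono_set Set.diff_subset)
            (integrableOn_const (lt_of_le_of_lt (measure_mono Set.diff_subset)
              measure_ball_lt_top).ne) (ht.diff hs) (fun y hy => ?_)
          exact Real.rpow_le_rpow (norm_nonneg _) (le_of_lt (mem_ball_zero_iff.1 hy.1)) hb0
      _ = r ^ b * (volume (t \ s)).toReal := by rw [setIntegral_const, smul_eq_mul, mul_comm, measureReal_def]
  have split_s : ∫ y in s, ‖y‖ ^ b = (∫ y in s ∩ t, ‖y‖ ^ b) + ∫ y in s \ t, ‖y‖ ^ b :=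
    (integral_inter_add_diff ht hint_s).symm
  have split_t : ∫ y in t, ‖y‖ ^ b = (∫ y in t ∩ s, ‖y‖ ^ b) + ∫ y in t \ s, ‖y‖ ^ b :=
    (integral_inter_add_diff hs hint_t).symm
  rw [split_s, split_t, Set.inter_comm t s]
  have : (volume (t \ s)).toReal = (volume (s \ t)).toReal := by rw [hvol_diff]
  calc (∫ y in s ∩ t, ‖y‖ ^ b) + ∫ y in t \ s, ‖y‖ ^ b
      ≤ (∫ y in s ∩ t, ‖y‖ ^ b) + r ^ b * (volume (t \ s)).toReal := by linarith
    _ = (∫ y in s ∩ t, ‖y‖ ^ b) + r ^ b * (volume (s \ t)).toReal := by rw [this]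
    _ ≤ (∫ y in s ∩ t, ‖y‖ ^ b) + ∫ y in s \ t, ‖y‖ ^ b := by linarith

/-- Lemma 2.1(ii), lower bound: for `w(x) = |x|^b` with `0 ≤ b < n`, for all `x ∈ ℝⁿ` and
`r > 0` one has `∫_{B(x,r)} |y|^b dy ≥ (n ωₙ/(n+b)) r^{n+b}`, where `ωₙ` is the volume of
the unit ball in `ℝⁿ`; in particular there exists `C > 0` depending only on `n` and `b`
with `∫_{B(x,r)} |y|^b dy ≥ C r^{n+b}`. -/
theorem stmt_2 (n : ℕ) (hn : 0 < n) (b : ℝ) (hb0 : 0 ≤ b) (hbn : b < n) :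
    (∀ (x : EuclideanSpace ℝ (Fin n)) (r : ℝ), 0 < r →
      (n : ℝ) * (volume (ball (0 : EuclideanSpace ℝ (Fin n)) 1)).toReal / ((n : ℝ) + b) *
          r ^ ((n : ℝ) + b)
        ≤ ∫ y in ball x r, ‖y‖ ^ b) ∧
    ∃ C : ℝ, 0 < C ∧ ∀ (x : EuclideanSpace ℝ (Fin n)) (r : ℝ), 0 < r →
      C * r ^ ((n : ℝ) + b) ≤ ∫ y in ball x r, ‖y‖ ^ b := by
  have main : ∀ (x : EuclideanSpace ℝ (Fin n)) (r : ℝ), 0 < r →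
      (n : ℝ) * (volume (ball (0 : EuclideanSpace ℝ (Fin n)) 1)).toReal / ((n : ℝ) + b) *
          r ^ ((n : ℝ) + b) ≤ ∫ y in ball x r, ‖y‖ ^ b := by
    intro x r hr
    rw [← stmt2_center n hn b hb0 r hr]
    exact stmt2_mono n b hb0 x r hr
  refine ⟨main, ⟨(n : ℝ) * (volume (ball (0 : EuclideanSpace ℝ (Fin n)) 1)).toReal / ((n : ℝ) + b),
    ?_, main⟩⟩
  have h1 : 0 < (volume (ball (0 : EuclideanSpace ℝ (Fin n)) 1)).toReal :=
    ENNReal.toReal_pos (measure_ball_pos volume 0 one_pos).ne' measure_ball_lt_top.ne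
  have h2 : (0:ℝ) < n := by exact_mod_cast hn
  positivity
end

section
/- Let Γ : ℝⁿ × ℝⁿ × (0,∞) → [0,∞) be measurable, satisfying (K1) and the pointwise bound Γ(x,y,t) ≤ D t^{−(n+α)/2} for all x, y ∈ ℝⁿ and t > 0 (with D depending only on n and α). Then for every φ ∈ L^q(w) and every 1 ≤ q ≤ r ≤ ∞, ‖S(t)φw‖_{L^r(w)} ≤ c₁ t^{−((n+α)/2)(1/q − 1/r)} ‖φ‖_{L^q(w)} for all t > 0, where c₁ depends only on n and α. -/
open MeasureTheory Metric Set

/-- Case (A) or case (B) of the paper: the weight is `w(x) = |x₁|^α` with `0 ≤ α < 1`,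
or `w(x) = |x|^α` with `0 ≤ α < n`. -/
def CaseAB (n : ℕ) (hn : 0 < n) (α : ℝ) (w : EuclideanSpace ℝ (Fin n) → ℝ) : Prop :=
  (0 ≤ α ∧ α < 1 ∧ ∀ x, w x = |x ⟨0, hn⟩| ^ α) ∨
  (0 ≤ α ∧ (α : ℝ) < n ∧ ∀ x, w x = ‖x‖ ^ α)

/-- The measure `w(x) dx` on `ℝⁿ`. -/
noncomputable def wMeas (n : ℕ) (w : EuclideanSpace ℝ (Fin n) → ℝ) :
    Measure (EuclideanSpace ℝ (Fin n)) :=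
  volume.withDensity fun x => ENNReal.ofReal (w x)

/-- `[S(t)φw](x) = ∫ Γ(x,y,t) φ(y) w(y) dy`. -/
noncomputable def Sop {n : ℕ} (μ : Measure (EuclideanSpace ℝ (Fin n)))
    (Γ : EuclideanSpace ℝ (Fin n) → EuclideanSpace ℝ (Fin n) → ℝ → ℝ)
    (φ : EuclideanSpace ℝ (Fin n) → ℝ) (t : ℝ) (x : EuclideanSpace ℝ (Fin n)) : ℝ :=
  ∫ y, Γ x y t * φ y ∂μ

/-- Property (K1): `∫ Γ(x,y,t) w(x) dx = ∫ Γ(x,y,t) w(y) dy = 1` for all `x, y, t > 0`. -/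
def PropK1 {n : ℕ} (w : EuclideanSpace ℝ (Fin n) → ℝ)
    (Γ : EuclideanSpace ℝ (Fin n) → EuclideanSpace ℝ (Fin n) → ℝ → ℝ) : Prop :=
  ∀ (x y : EuclideanSpace ℝ (Fin n)) (t : ℝ), 0 < t →
    (∫⁻ z, ENNReal.ofReal (Γ z y t * w z)) = 1 ∧ (∫⁻ z, ENNReal.ofReal (Γ x z t * w z)) = 1

/-! With `K(x, y) = Γ(x, y, t)`, property (K1) says that `K` is a doubly stochastic kernel for the
measure `w dx`, and `K ≤ M := D t^{-(n+α)/2}`. Jensen's inequality for the probability measure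
`K(x, ·) w` gives `|S(t)φw(x)|^q ≤ ∫ K(x, y) |φ(y)|^q w(y) dy`. Integrating in `x` (Tonelli and the
column normalization) yields an `L^q → L^q` bound with constant `1`, while `K ≤ M` yields an
`L^q → L^∞` bound with constant `M^{1/q}`. The pointwise inequality `∫ f^r ≤ ‖f‖_∞^{r-q} ∫ f^q`
interpolates between the two, with constant `M^{1/q - 1/r}`. -/

open scoped ENNReal

section DoublyStochasticKernel

variable {X : Type*} [MeasurableSpace X] {μ : Measure X}

/-- Jensen's inequality, seen as `‖g‖₁ ≤ ‖g‖ₚ` on the probability space `(X, h μ)`. -/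
theorem rpow_lintegral_mul_le_lintegral_mul_rpow {h g : X → ℝ≥0∞} (hh : AEMeasurable h μ)
    (hg : AEMeasurable g μ) (h1 : ∫⁻ x, h x ∂μ = 1) {p : ℝ} (hp : 1 ≤ p) :
    (∫⁻ x, h x * g x ∂μ) ^ p ≤ ∫⁻ x, h x * g x ^ p ∂μ := by
  have hp0 : 0 < p := by linarith
  have : IsProbabilityMeasure (μ.withDensity h) :=
    ⟨by rwa [withDensity_apply _ MeasurableSet.univ, Measure.restrict_univ]⟩
  have hg' : AEMeasurable g (μ.withDensity h) :=
    hg.mono_ac (withDensity_absolutelyContinuous μ h)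
  have key := eLpNorm_le_eLpNorm_of_exponent_le (f := g) (p := 1) (q := ENNReal.ofReal p)
    (ENNReal.one_le_ofReal.mpr hp) hg'.aestronglyMeasurable
  rw [eLpNorm_one_eq_lintegral_enorm, eLpNorm_eq_lintegral_rpow_enorm_toReal
    (by simpa using hp0) ENNReal.ofReal_ne_top, ENNReal.toReal_ofReal hp0.le, one_div,
    ENNReal.le_rpow_inv_iff hp0] at key
  simp only [enorm_eq_self] at key
  rwa [lintegral_withDensity_eq_lintegral_mul₀ hh hg,
    lintegral_withDensity_eq_lintegral_mul₀ hh (hg.pow_const p)] at key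

theorem lintegral_mul_le_rpow_mul_eLpNorm {K g : X → ℝ≥0∞} {M : ℝ≥0∞} (hK : AEMeasurable K μ)
    (hK1 : ∫⁻ y, K y ∂μ = 1) (hKM : ∀ y, K y ≤ M) (hg : AEMeasurable g μ) {p : ℝ≥0∞}
    (hp : 1 ≤ p) :
    ∫⁻ y, K y * g y ∂μ ≤ M ^ p⁻¹.toReal * eLpNorm g p μ := by
  rcases eq_or_ne p ∞ with rfl | hp_top
  · calc ∫⁻ y, K y * g y ∂μ ≤ ∫⁻ y, K y * eLpNorm g ∞ μ ∂μ := by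
          refine lintegral_mono_ae ((enorm_ae_le_eLpNormEssSup g μ).mono fun y hy => ?_)
          rw [eLpNorm_exponent_top]
          exact mul_le_mul_right hy _
      _ = M ^ (∞⁻¹ : ℝ≥0∞).toReal * eLpNorm g ∞ μ := by
          rw [lintegral_mul_const'' _ hK, hK1]
          simp
  have hp0 : 0 < p.toReal := ENNReal.toReal_pos (by positivity) hp_top
  have hp1 : 1 ≤ p.toReal := by simpa using ENNReal.toReal_mono hp_top hp
  rw [ENNReal.toReal_inv, eLpNorm_eq_lintegral_rpow_enorm_toReal (by positivity) hp_top, one_div,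
    ← ENNReal.mul_rpow_of_nonneg _ _ (by positivity), ENNReal.le_rpow_inv_iff hp0]
  simp only [enorm_eq_self]
  rw [← lintegral_const_mul'' _ (hg.pow_const _)]
  calc (∫⁻ y, K y * g y ∂μ) ^ p.toReal ≤ ∫⁻ y, K y * g y ^ p.toReal ∂μ :=
        rpow_lintegral_mul_le_lintegral_mul_rpow hK hg hK1 hp1
    _ ≤ ∫⁻ y, M * g y ^ p.toReal ∂μ :=
        lintegral_mono fun y => mul_le_mul_left (hKM y) _

variable {K : X → X → ℝ≥0∞}

theorem lintegral_rpow_lintegral_mul_le [SFinite μ] (hK : Measurable (Function.uncurry K))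
    (hrow : ∀ x, ∫⁻ y, K x y ∂μ = 1) (hcol : ∀ y, ∫⁻ x, K x y ∂μ = 1) {g : X → ℝ≥0∞}
    (hg : AEMeasurable g μ) {p : ℝ} (hp : 1 ≤ p) :
    ∫⁻ x, (∫⁻ y, K x y * g y ∂μ) ^ p ∂μ ≤ ∫⁻ y, g y ^ p ∂μ :=
  calc ∫⁻ x, (∫⁻ y, K x y * g y ∂μ) ^ p ∂μ ≤ ∫⁻ x, ∫⁻ y, K x y * g y ^ p ∂μ ∂μ :=
        lintegral_mono fun x => rpow_lintegral_mul_le_lintegral_mul_rpow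
          (hK.comp measurable_prodMk_left).aemeasurable hg (hrow x) hp
    _ = ∫⁻ y, ∫⁻ x, K x y * g y ^ p ∂μ ∂μ :=
        lintegral_lintegral_swap (hK.aemeasurable.mul (hg.pow_const p).comp_snd)
    _ = ∫⁻ y, g y ^ p ∂μ := by
        refine lintegral_congr fun y => ?_
        have hKy : Measurable fun x => K x y := hK.comp measurable_prodMk_right
        rw [lintegral_mul_const'' _ hKy.aemeasurable, hcol, one_mul]

theorem lintegral_rpow_le_rpow_sub_mul {f : X → ℝ≥0∞} {B : ℝ≥0∞} (hfm : AEMeasurable f μ)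
    (hf : ∀ x, f x ≤ B) {q r : ℝ} (hq : 0 ≤ q) (hqr : q ≤ r) :
    ∫⁻ x, f x ^ r ∂μ ≤ B ^ (r - q) * ∫⁻ x, f x ^ q ∂μ := by
  rw [← lintegral_const_mul'' _ (hfm.pow_const q)]
  refine lintegral_mono fun x => ?_
  rw [← sub_add_cancel r q, ENNReal.rpow_add_of_nonneg _ _ (sub_nonneg.mpr hqr) hq,
    add_sub_cancel_right]
  gcongr
  exact hf x

theorem eLpNorm_lintegral_mul_le [SFinite μ] {M : ℝ≥0∞} (hK : Measurable (Function.uncurry K))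
    (hrow : ∀ x, ∫⁻ y, K x y ∂μ = 1) (hcol : ∀ y, ∫⁻ x, K x y ∂μ = 1)
    (hKM : ∀ x y, K x y ≤ M) {g : X → ℝ≥0∞} (hg : AEMeasurable g μ) {q r : ℝ≥0∞} (hq : 1 ≤ q)
    (hqr : q ≤ r) :
    eLpNorm (fun x => ∫⁻ y, K x y * g y ∂μ) r μ ≤
      M ^ (q⁻¹.toReal - r⁻¹.toReal) * eLpNorm g q μ := by
  set N := eLpNorm g q μ
  have hbound : ∀ x, ∫⁻ y, K x y * g y ∂μ ≤ M ^ q⁻¹.toReal * N := fun x =>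
    lintegral_mul_le_rpow_mul_eLpNorm (hK.comp measurable_prodMk_left).aemeasurable (hrow x)
      (hKM x) hg hq
  rcases eq_or_ne r ∞ with rfl | hr_top
  · rw [eLpNorm_exponent_top, ENNReal.inv_top, ENNReal.toReal_zero, sub_zero]
    exact essSup_le_of_ae_le _ (ae_of_all _ hbound)
  have hq_top : q ≠ ∞ := ne_top_of_le_ne_top hr_top hqr
  have hq_ne : q ≠ 0 := (zero_lt_one.trans_le hq).ne'
  have hq1 : 1 ≤ q.toReal := by simpa using ENNReal.toReal_mono hq_top hq
  have hq0 : 0 < q.toReal := by linarith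
  have hqr' : q.toReal ≤ r.toReal := ENNReal.toReal_mono hr_top hqr
  have hr0 : 0 < r.toReal := hq0.trans_le hqr'
  have hsub : 0 ≤ r.toReal - q.toReal := sub_nonneg.mpr hqr'
  have hTm : AEMeasurable (fun x => ∫⁻ y, K x y * g y ∂μ) μ :=
    (hK.aemeasurable.mul hg.comp_snd).lintegral_prod_right
  have hI : ∫⁻ y, g y ^ q.toReal ∂μ = N ^ q.toReal := by
    rw [show N = _ from eLpNorm_eq_lintegral_rpow_enorm_toReal hq_ne hq_top, ← ENNReal.rpow_mul,
      one_div_mul_cancel hq0.ne', ENNReal.rpow_one]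
    simp only [enorm_eq_self]
  rw [eLpNorm_eq_lintegral_rpow_enorm_toReal (hq_ne.bot_lt.trans_le hqr).ne' hr_top, one_div]
  simp only [enorm_eq_self]
  calc (∫⁻ x, (∫⁻ y, K x y * g y ∂μ) ^ r.toReal ∂μ) ^ r.toReal⁻¹
      ≤ ((M ^ q⁻¹.toReal * N) ^ (r.toReal - q.toReal) * N ^ q.toReal) ^ r.toReal⁻¹ := by
        rw [← hI]
        gcongr
        exact (lintegral_rpow_le_rpow_sub_mul hTm hbound hq0.le hqr').trans
          (mul_le_mul_right (lintegral_rpow_lintegral_mul_le hK hrow hcol hg hq1) _)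
    _ = M ^ (q⁻¹.toReal - r⁻¹.toReal) * N := by
        rw [ENNReal.mul_rpow_of_nonneg _ _ hsub, mul_assoc,
          ← ENNReal.rpow_add_of_nonneg _ _ hsub hq0.le, sub_add_cancel,
          ENNReal.mul_rpow_of_nonneg _ _ (by positivity), ← ENNReal.rpow_mul N,
          mul_inv_cancel₀ hr0.ne', ENNReal.rpow_one, ← ENNReal.rpow_mul, ← ENNReal.rpow_mul,
          ENNReal.toReal_inv, ENNReal.toReal_inv]
        congr 2
        field_simp

end DoublyStochasticKernel

theorem CaseAB.measurable {n : ℕ} {hn : 0 < n} {α : ℝ} {w : EuclideanSpace ℝ (Fin n) → ℝ}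
    (hw : CaseAB n hn α w) : Measurable w := by
  rcases hw with ⟨-, -, h⟩ | ⟨-, -, h⟩
  · obtain rfl : w = _ := funext h
    fun_prop
  · obtain rfl : w = _ := funext h
    fun_prop

section WeightedSpace

variable {n : ℕ} {w : EuclideanSpace ℝ (Fin n) → ℝ}
  {Γ : EuclideanSpace ℝ (Fin n) → EuclideanSpace ℝ (Fin n) → ℝ → ℝ}

instance : SFinite (wMeas n w) := by
  unfold wMeas
  infer_instance

theorem lintegral_wMeas (hw : Measurable w) {f : EuclideanSpace ℝ (Fin n) → ℝ≥0∞}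
    (hf : Measurable f) : ∫⁻ z, f z ∂wMeas n w = ∫⁻ z, f z * ENNReal.ofReal (w z) := by
  rw [wMeas, lintegral_withDensity_eq_lintegral_mul _ (by fun_prop) hf]
  exact lintegral_congr fun z => mul_comm _ _

theorem PropK1.lintegral_wMeas_eq_one (hK1 : PropK1 w Γ) (hw : Measurable w) {t : ℝ}
    (ht : 0 < t) (hΓ0 : ∀ x y, 0 ≤ Γ x y t)
    (hK : Measurable (Function.uncurry fun x y => ENNReal.ofReal (Γ x y t))) :
    (∀ x, ∫⁻ y, ENNReal.ofReal (Γ x y t) ∂wMeas n w = 1) ∧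
      ∀ y, ∫⁻ x, ENNReal.ofReal (Γ x y t) ∂wMeas n w = 1 := by
  refine ⟨fun x => ?_, fun y => ?_⟩
  · have hKx : Measurable fun y => ENNReal.ofReal (Γ x y t) := hK.comp measurable_prodMk_left
    rw [lintegral_wMeas hw hKx, ← (hK1 x x t ht).2]
    simp only [ENNReal.ofReal_mul (hΓ0 _ _)]
  · have hKy : Measurable fun x => ENNReal.ofReal (Γ x y t) := hK.comp measurable_prodMk_right
    rw [lintegral_wMeas hw hKy, ← (hK1 y y t ht).1]
    simp only [ENNReal.ofReal_mul (hΓ0 _ _)]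

theorem enorm_Sop_le (μ : Measure (EuclideanSpace ℝ (Fin n))) {t : ℝ}
    (hΓ0 : ∀ x y, 0 ≤ Γ x y t) (φ : EuclideanSpace ℝ (Fin n) → ℝ) (x : EuclideanSpace ℝ (Fin n)) :
    ‖Sop μ Γ φ t x‖ₑ ≤ ∫⁻ y, ENNReal.ofReal (Γ x y t) * ‖φ y‖ₑ ∂μ :=
  (enorm_integral_le_lintegral_enorm _).trans_eq <| lintegral_congr fun y => by
    rw [enorm_mul, Real.enorm_eq_ofReal (hΓ0 x y)]

end WeightedSpace

theorem toReal_inv_sub_toReal_inv_mem_Icc {q r : ℝ≥0∞} (hq : 1 ≤ q) (hqr : q ≤ r) :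
    q⁻¹.toReal - r⁻¹.toReal ∈ Icc 0 1 := by
  have hq_inv : q⁻¹ ≤ 1 := ENNReal.inv_le_one.mpr hq
  refine ⟨sub_nonneg.mpr (ENNReal.toReal_mono (ne_top_of_le_ne_top ENNReal.one_ne_top hq_inv)
    (ENNReal.inv_le_inv.mpr hqr)), (sub_le_self _ ENNReal.toReal_nonneg).trans ?_⟩
  simpa using ENNReal.toReal_mono ENNReal.one_ne_top hq_inv

theorem ofReal_mul_rpow_rpow_le {D t θ : ℝ} (s : ℝ) (ht : 0 < t) (hθ : θ ∈ Icc 0 1) :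
    ENNReal.ofReal (D * t ^ s) ^ θ ≤ ENNReal.ofReal (max D 1 * t ^ (s * θ)) := by
  obtain ⟨hθ0, hθ1⟩ := hθ
  have hts : 0 ≤ t ^ s := Real.rpow_nonneg ht.le s
  calc ENNReal.ofReal (D * t ^ s) ^ θ ≤ ENNReal.ofReal (max D 1 * t ^ s) ^ θ := by
        gcongr
        exact le_max_left D 1
    _ = ENNReal.ofReal (max D 1 ^ θ * t ^ (s * θ)) := by
        rw [ENNReal.ofReal_rpow_of_nonneg (by positivity) hθ0,
          Real.mul_rpow (by positivity) hts, Real.rpow_mul ht.le]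
    _ ≤ ENNReal.ofReal (max D 1 * t ^ (s * θ)) := by
        gcongr
        simpa using Real.rpow_le_rpow_of_exponent_le (le_max_right D 1) hθ1

theorem stmt_8_general (n : ℕ) (hn : 0 < n) (α : ℝ) (w : EuclideanSpace ℝ (Fin n) → ℝ)
    (hw : CaseAB n hn α w) (D : ℝ) :
    ∃ c₁ : ℝ, 0 < c₁ ∧
      ∀ Γ : EuclideanSpace ℝ (Fin n) → EuclideanSpace ℝ (Fin n) → ℝ → ℝ,
        Measurable (fun q : (EuclideanSpace ℝ (Fin n)) × (EuclideanSpace ℝ (Fin n)) × ℝ =>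
          Γ q.1 q.2.1 q.2.2) →
        (∀ x y t, 0 ≤ Γ x y t) → PropK1 w Γ →
        (∀ (x y : EuclideanSpace ℝ (Fin n)) (t : ℝ), 0 < t →
          Γ x y t ≤ D * t ^ (-((n : ℝ) + α) / 2)) →
        ∀ q r : ENNReal, 1 ≤ q → q ≤ r →
          ∀ φ : EuclideanSpace ℝ (Fin n) → ℝ, MemLp φ q (wMeas n w) →
            ∀ t : ℝ, 0 < t →
              eLpNorm (Sop (wMeas n w) Γ φ t) r (wMeas n w) ≤
                ENNReal.ofReal (c₁ * t ^ (-(((n : ℝ) + α) / 2) * (q⁻¹.toReal - r⁻¹.toReal))) *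
                  eLpNorm φ q (wMeas n w) := by
  refine ⟨max D 1, zero_lt_one.trans_le (le_max_right D 1), ?_⟩
  intro Γ hΓm hΓ0 hK1 hΓD q r hq hqr φ hφ t ht
  set K := fun x y => ENNReal.ofReal (Γ x y t)
  have hK : Measurable (Function.uncurry K) :=
    ENNReal.measurable_ofReal.comp
      (hΓm.comp (measurable_fst.prodMk (measurable_snd.prodMk measurable_const)))
  obtain ⟨hrow, hcol⟩ := hK1.lintegral_wMeas_eq_one hw.measurable ht (fun x y => hΓ0 x y t) hK
  calc eLpNorm (Sop (wMeas n w) Γ φ t) r (wMeas n w)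
      ≤ eLpNorm (fun x => ∫⁻ y, K x y * ‖φ y‖ₑ ∂wMeas n w) r (wMeas n w) :=
        eLpNorm_mono_enorm fun x =>
          (enorm_Sop_le _ (fun x y => hΓ0 x y t) φ x).trans_eq (enorm_eq_self _).symm
    _ ≤ ENNReal.ofReal (D * t ^ (-((n : ℝ) + α) / 2)) ^ (q⁻¹.toReal - r⁻¹.toReal) *
          eLpNorm φ q (wMeas n w) := by
        simpa only [eLpNorm_enorm] using eLpNorm_lintegral_mul_le hK hrow hcol
          (fun x y => ENNReal.ofReal_le_ofReal (hΓD x y t ht)) hφ.1.enorm hq hqr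
    _ ≤ _ := by
        rw [neg_div]
        gcongr
        exact ofReal_mul_rpow_rpow_le _ ht (toReal_inv_sub_toReal_inv_mem_Icc hq hqr)

/-- Lemma 2.3: in case (A) or (B), if `Γ ≥ 0` is measurable, satisfies (K1) and the bound
`Γ(x,y,t) ≤ D t^{-(n+α)/2}`, then for `φ ∈ L^q(w)` and `1 ≤ q ≤ r ≤ ∞`,
`‖S(t)φw‖_{L^r(w)} ≤ c₁ t^{-((n+α)/2)(1/q-1/r)} ‖φ‖_{L^q(w)}` for all `t > 0`, where
`c₁` depends only on `n`, `α` (and `D`). -/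
theorem stmt_8 (n : ℕ) (hn : 0 < n) (α : ℝ) (w : EuclideanSpace ℝ (Fin n) → ℝ)
    (hw : CaseAB n hn α w) (D : ℝ) (hD : 0 < D) :
    ∃ c₁ : ℝ, 0 < c₁ ∧
      ∀ Γ : EuclideanSpace ℝ (Fin n) → EuclideanSpace ℝ (Fin n) → ℝ → ℝ,
        Measurable (fun q : (EuclideanSpace ℝ (Fin n)) × (EuclideanSpace ℝ (Fin n)) × ℝ =>
          Γ q.1 q.2.1 q.2.2) →
        (∀ x y t, 0 ≤ Γ x y t) → PropK1 w Γ →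
        (∀ (x y : EuclideanSpace ℝ (Fin n)) (t : ℝ), 0 < t →
          Γ x y t ≤ D * t ^ (-((n : ℝ) + α) / 2)) →
        ∀ q r : ENNReal, 1 ≤ q → q ≤ r →
          ∀ φ : EuclideanSpace ℝ (Fin n) → ℝ, MemLp φ q (wMeas n w) →
            ∀ t : ℝ, 0 < t →
              eLpNorm (Sop (wMeas n w) Γ φ t) r (wMeas n w) ≤
                ENNReal.ofReal (c₁ * t ^ (-(((n : ℝ) + α) / 2) * (q⁻¹.toReal - r⁻¹.toReal))) *
                  eLpNorm φ q (wMeas n w) :=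
  stmt_8_general n hn α w hw D
end

section
/- Let Γ : ℝⁿ × ℝⁿ × (0,∞) → [0,∞) be measurable, satisfying (K1) and the Gaussian upper bound Γ(x,y,t) ≤ D t^{−(n+α)/2} exp(−|x−y|²/(D t)) for all x, y ∈ ℝⁿ and t > 0 (with D depending only on n and α). Then for every φ ∈ L^{q,∞}(w) with 1 < q ≤ ∞ and every q ≤ r ≤ ∞, ‖S(t)φw‖_{L^{r,∞}(w)} ≤ c₂ t^{−((n+α)/2)(1/q − 1/r)} ‖φ‖_{L^{q,∞}(w)} for all t > 0, where c₂ depends only on q, n and α, and is bounded for q ∈ (1+ε, ∞) for any fixed ε > 0. -/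
open MeasureTheory Metric Set

/-- The weak Lorentz norm `‖f‖_{L^{r,∞}(μ)} = sup_{λ>0} λ μ({|f| > λ})^{1/r}` for
`1 < r < ∞`, with `L^{∞,∞}(μ) = L^∞`. -/
noncomputable def weakNorm {X : Type*} [MeasurableSpace X] (μ : Measure X) (f : X → ℝ)
    (r : ENNReal) : ENNReal :=
  if r = ⊤ then eLpNorm f ⊤ μ
  else ⨆ (lam : ℝ) (_ : 0 < lam), ENNReal.ofReal lam * μ {x | lam < |f x|} ^ (1 / r.toReal)

/-- The `L^{q,∞}(w)`–`L^{r,∞}(w)` smoothing estimate of Lemma 2.5 with constant `c₂` and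
lower exponent `q`: for all `q ≤ r ≤ ∞`, `φ ∈ L^{q,∞}(w)` and `t > 0`,
`‖S(t)φw‖_{L^{r,∞}(w)} ≤ c₂ t^{-((n+α)/2)(1/q-1/r)} ‖φ‖_{L^{q,∞}(w)}`. -/
def SmoothingBound (n : ℕ) (α : ℝ) (w : EuclideanSpace ℝ (Fin n) → ℝ)
    (Γ : EuclideanSpace ℝ (Fin n) → EuclideanSpace ℝ (Fin n) → ℝ → ℝ)
    (c₂ : ℝ) (q : ENNReal) : Prop :=
  ∀ r : ENNReal, q ≤ r →
    ∀ φ : EuclideanSpace ℝ (Fin n) → ℝ, Measurable φ → weakNorm (wMeas n w) φ q < ⊤ →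
      ∀ t : ℝ, 0 < t →
        weakNorm (wMeas n w) (Sop (wMeas n w) Γ φ t) r ≤
          ENNReal.ofReal (c₂ * t ^ (-(((n : ℝ) + α) / 2) * (q⁻¹.toReal - r⁻¹.toReal))) *
            weakNorm (wMeas n w) φ q

namespace Stmt10Aux

lemma rpow_le_max_one {a θ : ℝ} (ha : 0 < a) (hθ0 : 0 ≤ θ) (hθ1 : θ ≤ 1) :
    a ^ θ ≤ max 1 a := by
  rcases le_or_gt a 1 with h | h
  · refine le_max_of_le_left ?_
    calc a ^ θ ≤ a ^ (0:ℝ) := Real.rpow_le_rpow_of_exponent_ge ha h hθ0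
    _ = 1 := Real.rpow_zero a
  · refine le_max_of_le_right ?_
    calc a ^ θ ≤ a ^ (1:ℝ) := Real.rpow_le_rpow_of_exponent_le h.le hθ1
    _ = a := Real.rpow_one a

lemma rpowTail {qr s : ℝ} (hqr : 1 < qr) (hs : 0 < s) :
    ∫⁻ u in Ioi s, (ENNReal.ofReal u) ^ (-qr) = ENNReal.ofReal (s ^ (1 - qr) / (qr - 1)) := by
  have h1 : ∫⁻ u in Ioi s, (ENNReal.ofReal u) ^ (-qr)
      = ∫⁻ u in Ioi s, ENNReal.ofReal (u ^ (-qr)) := by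
    refine setLIntegral_congr_fun measurableSet_Ioi ?_
    intro u hu
    exact ENNReal.ofReal_rpow_of_pos (hs.trans hu)
  have hint : IntegrableOn (fun u : ℝ => u ^ (-qr)) (Ioi s) :=
    integrableOn_Ioi_rpow_of_lt (by linarith) hs
  have hnn : 0 ≤ᵐ[volume.restrict (Ioi s)] fun u : ℝ => u ^ (-qr) := by
    filter_upwards [ae_restrict_mem measurableSet_Ioi] with u hu
    exact Real.rpow_nonneg (hs.trans hu).le _
  rw [h1, ← ofReal_integral_eq_lintegral_ofReal hint hnn,
    integral_Ioi_rpow_of_lt (by linarith) hs]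
  congr 1
  have h2 : -qr + 1 = 1 - qr := by ring
  rw [h2, show (qr - 1) = -(1 - qr) by ring, div_neg, ← neg_div]

lemma minCalc {qr : ℝ} (hqr : 1 < qr) {K : ENNReal} (hK : K ≠ ⊤) :
    ∫⁻ u in Ioi (0:ℝ), min 1 (K * (ENNReal.ofReal u) ^ (-qr)) ≤
      ENNReal.ofReal (qr / (qr - 1)) * K ^ (1/qr) := by
  rcases eq_or_ne K 0 with rfl | hK0
  · simp
  have hqr0 : (0:ℝ) < qr := by linarith
  have hKrt : K ^ (1/qr) ≠ ⊤ := ENNReal.rpow_ne_top_of_nonneg (by positivity) hK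
  have hKr0 : K ^ (1/qr) ≠ 0 := by
    simp [ENNReal.rpow_eq_zero_iff, hK0, hK]
  set lam0 : ℝ := (K ^ (1/qr)).toReal with hlam0def
  have hlam0 : 0 < lam0 := ENNReal.toReal_pos hKr0 hKrt
  have hofl : ENNReal.ofReal lam0 = K ^ (1/qr) := ENNReal.ofReal_toReal hKrt
  have hKeq : K = ENNReal.ofReal (lam0 ^ qr) := by
    rw [← ENNReal.ofReal_rpow_of_pos hlam0, hofl, ← ENNReal.rpow_mul,
      one_div_mul_cancel (ne_of_gt hqr0), ENNReal.rpow_one]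
  have hsplit : (Ioi (0:ℝ)) = Ioc 0 lam0 ∪ Ioi lam0 := (Ioc_union_Ioi_eq_Ioi hlam0.le).symm
  calc ∫⁻ u in Ioi (0:ℝ), min 1 (K * (ENNReal.ofReal u) ^ (-qr))
      ≤ (∫⁻ u in Ioc (0:ℝ) lam0, min 1 (K * (ENNReal.ofReal u) ^ (-qr)))
        + ∫⁻ u in Ioi lam0, min 1 (K * (ENNReal.ofReal u) ^ (-qr)) := by
        rw [hsplit]; exact lintegral_union_le _ _ _
    _ ≤ (∫⁻ _ in Ioc (0:ℝ) lam0, 1)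
        + ∫⁻ u in Ioi lam0, K * (ENNReal.ofReal u) ^ (-qr) := by
        gcongr
        · exact min_le_left _ _
        · exact min_le_right _ _
    _ = ENNReal.ofReal lam0 + K * ENNReal.ofReal (lam0 ^ (1-qr) / (qr - 1)) := by
        rw [setLIntegral_one, Real.volume_Ioc, sub_zero,
          lintegral_const_mul' _ _ hK, rpowTail hqr hlam0]
    _ = ENNReal.ofReal (lam0 + lam0 ^ qr * (lam0 ^ (1-qr) / (qr - 1))) := by
        have h1 : (0:ℝ) ≤ lam0 ^ qr := Real.rpow_nonneg hlam0.le _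
        have h2 : (0:ℝ) ≤ lam0 ^ (1-qr) / (qr-1) :=
          div_nonneg (Real.rpow_nonneg hlam0.le _) (by linarith)
        rw [hKeq, ← ENNReal.ofReal_mul h1, ENNReal.ofReal_add hlam0.le (mul_nonneg h1 h2)]
    _ = ENNReal.ofReal (qr / (qr - 1)) * K ^ (1/qr) := by
        rw [← hofl, ← ENNReal.ofReal_mul (div_nonneg (by linarith) (by linarith))]
        congr 1
        rw [mul_div_assoc' , ← Real.rpow_add hlam0]
        have h3 : qr + (1 - qr) = 1 := by ring
        rw [h3, Real.rpow_one]
        have h1 : qr - 1 ≠ 0 := by linarith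
        field_simp
        ring

noncomputable def cfun (D : ℝ) (q : ENNReal) : ℝ :=
  if q = ⊤ then 1 else
    max 1 (2 * (q.toReal / (q.toReal - 1)) ^ (1 / q.toReal)) *
      max 1 ((q.toReal / (q.toReal - 1)) * D ^ (1 / q.toReal))

lemma cfun_pos (D : ℝ) (q : ENNReal) : 0 < cfun D q := by
  unfold cfun; split
  · norm_num
  · exact mul_pos (lt_max_of_lt_left one_pos) (lt_max_of_lt_left one_pos)

lemma main (n : ℕ) (hn : 0 < n) (α : ℝ) (w : EuclideanSpace ℝ (Fin n) → ℝ)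
    (hw : CaseAB n hn α w) (D : ℝ) (hD : 0 < D)
    (Γ : EuclideanSpace ℝ (Fin n) → EuclideanSpace ℝ (Fin n) → ℝ → ℝ)
    (hmeas : Measurable (fun q : (EuclideanSpace ℝ (Fin n)) × (EuclideanSpace ℝ (Fin n)) × ℝ =>
      Γ q.1 q.2.1 q.2.2))
    (hΓ0 : ∀ x y t, 0 ≤ Γ x y t) (hK1 : PropK1 w Γ)
    (hΓD : ∀ (x y : EuclideanSpace ℝ (Fin n)) (t : ℝ), 0 < t →
      Γ x y t ≤ D * t ^ (-((n : ℝ) + α) / 2) * Real.exp (-‖x - y‖ ^ 2 / (D * t)))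
    (q : ENNReal) (hq : 1 < q) :
    SmoothingBound n α w Γ (cfun D q) q := by
  have hwnn : ∀ x, 0 ≤ w x := by
    rcases hw with ⟨hα, -, h⟩ | ⟨hα, -, h⟩ <;> intro x <;> rw [h x] <;> positivity
  have hwm : Measurable fun x => ENNReal.ofReal (w x) := by
    rcases hw with ⟨hα, -, h⟩ | ⟨hα, -, h⟩
    · have hm : Measurable fun x : EuclideanSpace ℝ (Fin n) => |x ⟨0, hn⟩| ^ α :=
        (Real.continuous_rpow_const hα).measurable.comp (EuclideanSpace.proj (𝕜 := ℝ) (⟨0, hn⟩ : Fin n)).continuous.measurable.abs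
      have : (fun x => ENNReal.ofReal (w x))
          = fun x : EuclideanSpace ℝ (Fin n) => ENNReal.ofReal (|x ⟨0, hn⟩| ^ α) := by
        funext x; rw [h x]
      rw [this]; exact hm.ennreal_ofReal
    · have hm : Measurable fun x : EuclideanSpace ℝ (Fin n) => ‖x‖ ^ α :=
        (Real.continuous_rpow_const hα).measurable.comp measurable_norm
      have : (fun x => ENNReal.ofReal (w x))
          = fun x : EuclideanSpace ℝ (Fin n) => ENNReal.ofReal (‖x‖ ^ α) := by
        funext x; rw [h x]
      rw [this]; exact hm.ennreal_ofReal
  haveI : SigmaFinite (wMeas n w) := MeasureTheory.SigmaFinite.withDensity_ofReal w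
  intro r hqr φ hφ hN t ht
  have hΓum : Measurable (fun p : (EuclideanSpace ℝ (Fin n)) × (EuclideanSpace ℝ (Fin n)) =>
      ENNReal.ofReal (Γ p.1 p.2 t)) :=
    (hmeas.comp (measurable_fst.prodMk (measurable_snd.prodMk measurable_const))).ennreal_ofReal
  have hΓx : ∀ x, Measurable fun y => ENNReal.ofReal (Γ x y t) :=
    fun x => hΓum.comp (measurable_const.prodMk measurable_id)
  have hΓy : ∀ y, Measurable fun x => ENNReal.ofReal (Γ x y t) :=
    fun y => hΓum.comp (measurable_id.prodMk measurable_const)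
  have hφm : Measurable fun y => ENNReal.ofReal |φ y| := hφ.abs.ennreal_ofReal
  have hμ : wMeas n w = volume.withDensity (fun x => ENNReal.ofReal (w x)) := rfl
  have k1r : ∀ x, ∫⁻ y, ENNReal.ofReal (Γ x y t) ∂(wMeas n w) = 1 := by
    intro x
    rw [hμ, lintegral_withDensity_eq_lintegral_mul _ hwm (hΓx x), ← (hK1 x x t ht).2]
    refine lintegral_congr fun z => ?_
    simp only [Pi.mul_apply]
    rw [ENNReal.ofReal_mul (hΓ0 x z t), mul_comm]
  have k1l : ∀ y, ∫⁻ x, ENNReal.ofReal (Γ x y t) ∂(wMeas n w) = 1 := by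
    intro y
    rw [hμ, lintegral_withDensity_eq_lintegral_mul _ hwm (hΓy y), ← (hK1 y y t ht).1]
    refine lintegral_congr fun z => ?_
    simp only [Pi.mul_apply]
    rw [ENNReal.ofReal_mul (hΓ0 z y t), mul_comm]
  set F : EuclideanSpace ℝ (Fin n) → ENNReal :=
    fun x => ∫⁻ y, ENNReal.ofReal (Γ x y t) * ENNReal.ofReal |φ y| ∂(wMeas n w) with hFdef
  have hSF : ∀ x, (‖Sop (wMeas n w) Γ φ t x‖₊ : ENNReal) ≤ F x := by
    intro x
    calc (‖Sop (wMeas n w) Γ φ t x‖₊ : ENNReal)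
        ≤ ∫⁻ y, ‖Γ x y t * φ y‖₊ ∂(wMeas n w) := enorm_integral_le_lintegral_enorm _
      _ = F x := by
          refine lintegral_congr fun y => ?_
          rw [← enorm_eq_nnnorm, Real.enorm_eq_ofReal_abs, abs_mul, abs_of_nonneg (hΓ0 x y t),
            ENNReal.ofReal_mul (hΓ0 x y t)]
  have hsub : ∀ lam : ℝ, 0 < lam →
      {x | lam < |Sop (wMeas n w) Γ φ t x|} ⊆ {x | ENNReal.ofReal lam < F x} := by
    intro lam hlam x hx
    have hx' : lam < |Sop (wMeas n w) Γ φ t x| := hx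
    have h1 : ENNReal.ofReal lam < ENNReal.ofReal |Sop (wMeas n w) Γ φ t x| :=
      (ENNReal.ofReal_lt_ofReal_iff (hlam.trans hx')).mpr hx'
    exact h1.trans_le (((enorm_eq_nnnorm _).symm.trans (Real.enorm_eq_ofReal_abs _)) ▸ hSF x)
  rcases eq_or_ne q ⊤ with rfl | hqt
  -- Case q = ⊤ : then r = ⊤ and the claim follows from (K1).
  · have hr : r = ⊤ := top_le_iff.mp hqr
    subst hr
    rw [weakNorm, if_pos rfl] at hN ⊢
    rw [weakNorm, if_pos rfl]
    set M := eLpNorm φ ⊤ (wMeas n w) with hM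
    have hMne : M ≠ ⊤ := hN.ne
    have hub : ∀ᵐ y ∂(wMeas n w), ENNReal.ofReal |φ y| ≤ M := by
      filter_upwards [ENNReal.ae_le_essSup (μ := wMeas n w) (fun y => (‖φ y‖₊ : ENNReal))] with y hy
      rw [← Real.enorm_eq_ofReal_abs, enorm_eq_nnnorm]
      refine hy.trans_eq ?_
      rw [hM, eLpNorm_exponent_top]; rfl
    have hFM : ∀ x, F x ≤ M := by
      intro x
      calc F x ≤ ∫⁻ y, ENNReal.ofReal (Γ x y t) * M ∂(wMeas n w) := by
            refine lintegral_mono_ae ?_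
            filter_upwards [hub] with y hy
            exact mul_le_mul_right hy _
        _ = (∫⁻ y, ENNReal.ofReal (Γ x y t) ∂(wMeas n w)) * M :=
            lintegral_mul_const' M _ hMne
        _ = M := by rw [k1r x, one_mul]
    have hSle : eLpNorm (Sop (wMeas n w) Γ φ t) ⊤ (wMeas n w) ≤ M := by
      rw [eLpNorm_exponent_top]
      exact essSup_le_of_ae_le M (Filter.Eventually.of_forall fun x => (hSF x).trans (hFM x))
    refine hSle.trans ?_
    have h1 : ENNReal.ofReal (cfun D ⊤
        * t ^ (-(((n : ℝ) + α) / 2) * ((⊤ : ENNReal)⁻¹.toReal - (⊤ : ENNReal)⁻¹.toReal))) = 1 := by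
      simp [cfun]
    rw [h1, one_mul]
  -- Case q ≠ ⊤
  · have hqr1 : 1 < q.toReal := by
      rw [← ENNReal.toReal_one]
      exact (ENNReal.toReal_lt_toReal (by simp) hqt).mpr hq
    set qr := q.toReal with hqrdef
    have hqr0 : (0:ℝ) < qr := by linarith
    set N := weakNorm (wMeas n w) φ q with hNdef
    have hNt : N ≠ ⊤ := hN.ne
    have hNsup : ∀ lam : ℝ, 0 < lam →
        ENNReal.ofReal lam * ((wMeas n w) {y | lam < |φ y|}) ^ (1/qr) ≤ N := by
      intro lam hlam
      rw [hNdef, weakNorm, if_neg hqt]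
      exact le_iSup₂ (f := fun (lam : ℝ) (_ : 0 < lam) =>
        ENNReal.ofReal lam * ((wMeas n w) {x | lam < |φ x|}) ^ (1/q.toReal)) lam hlam
    have distφ : ∀ lam : ℝ, 0 < lam →
        (wMeas n w) {y | lam < |φ y|} ≤ N ^ qr * (ENNReal.ofReal lam) ^ (-qr) := by
      intro lam hlam
      have h0 : ENNReal.ofReal lam ≠ 0 := (ENNReal.ofReal_pos.mpr hlam).ne'
      have h1 : ((wMeas n w) {y | lam < |φ y|}) ^ (1/qr) ≤ N / ENNReal.ofReal lam := by
        rw [ENNReal.le_div_iff_mul_le (Or.inl h0) (Or.inl ENNReal.ofReal_ne_top), mul_comm]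
        exact hNsup lam hlam
      calc (wMeas n w) {y | lam < |φ y|}
          = (((wMeas n w) {y | lam < |φ y|}) ^ (1/qr)) ^ qr := by
            rw [← ENNReal.rpow_mul, one_div_mul_cancel hqr0.ne', ENNReal.rpow_one]
        _ ≤ (N / ENNReal.ofReal lam) ^ qr := ENNReal.rpow_le_rpow h1 (by linarith)
        _ = N ^ qr * (ENNReal.ofReal lam) ^ (-qr) := by
            rw [ENNReal.div_rpow_of_nonneg _ _ (by linarith), ENNReal.rpow_neg, div_eq_mul_inv]
    have hΓsup : ∀ x y, ENNReal.ofReal (Γ x y t)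
        ≤ ENNReal.ofReal (D * t ^ (-((n:ℝ) + α) / 2)) := by
      intro x y
      apply ENNReal.ofReal_le_ofReal
      have hexp : Real.exp (-‖x - y‖ ^ 2 / (D * t)) ≤ 1 := by
        rw [Real.exp_le_one_iff]
        exact div_nonpos_of_nonpos_of_nonneg (neg_nonpos.mpr (by positivity)) (by positivity)
      calc Γ x y t ≤ D * t ^ (-((n:ℝ) + α) / 2) * Real.exp (-‖x - y‖ ^ 2 / (D * t)) :=
            hΓD x y t ht
        _ ≤ D * t ^ (-((n:ℝ) + α) / 2) * 1 := by
            refine mul_le_mul_of_nonneg_left hexp (by positivity)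
        _ = D * t ^ (-((n:ℝ) + α) / 2) := mul_one _
    set Aexp : ℝ := (-(((n:ℝ) + α) / 2)) * (1/qr) with hAexp
    set Bq : ℝ := qr/(qr-1) * D ^ (1/qr) with hBq
    have hBqpos : 0 < Bq :=
      mul_pos (div_pos hqr0 (by linarith)) (Real.rpow_pos_of_pos hD _)
    set A : ENNReal := ENNReal.ofReal (Bq * t ^ Aexp) with hA
    have hApos : (0:ℝ) < Bq * t ^ Aexp := mul_pos hBqpos (Real.rpow_pos_of_pos ht _)
    -- the sup bound (weak L^q → L^∞)
    have supF : ∀ x, F x ≤ A * N := by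
      intro x
      set ν := (wMeas n w).withDensity (fun y => ENNReal.ofReal (Γ x y t)) with hν
      have hF : F x = ∫⁻ y, ENNReal.ofReal |φ y| ∂ν := by
        rw [hFdef, hν, lintegral_withDensity_eq_lintegral_mul _ (hΓx x) hφm]; rfl
      have hlc : F x = ∫⁻ lam in Ioi (0:ℝ), ν {y | lam < |φ y|} := by
        rw [hF]
        exact lintegral_eq_lintegral_meas_lt ν
          (Filter.Eventually.of_forall fun y => abs_nonneg _) hφ.abs.aemeasurable
      set K := ENNReal.ofReal (D * t ^ (-((n:ℝ) + α) / 2)) * N ^ qr with hKdef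
      have hKt : K ≠ ⊤ :=
        ENNReal.mul_ne_top ENNReal.ofReal_ne_top
          (ENNReal.rpow_ne_top_of_nonneg (by linarith) hNt)
      have hbound : ∀ lam ∈ Ioi (0:ℝ),
          ν {y | lam < |φ y|} ≤ min 1 (K * (ENNReal.ofReal lam) ^ (-qr)) := by
        intro lam hlam
        have hms : MeasurableSet {y | lam < |φ y|} := measurableSet_lt measurable_const hφ.abs
        rw [hν, withDensity_apply _ hms]
        refine le_min ?_ ?_
        · exact (setLIntegral_le_lintegral _ _).trans (k1r x).le
        · calc ∫⁻ y in {y | lam < |φ y|}, ENNReal.ofReal (Γ x y t) ∂(wMeas n w)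
              ≤ ∫⁻ _ in {y | lam < |φ y|},
                  ENNReal.ofReal (D * t ^ (-((n:ℝ) + α) / 2)) ∂(wMeas n w) :=
                setLIntegral_mono' hms fun y _ => hΓsup x y
            _ = ENNReal.ofReal (D * t ^ (-((n:ℝ) + α) / 2))
                  * (wMeas n w) {y | lam < |φ y|} := setLIntegral_const _ _
            _ ≤ ENNReal.ofReal (D * t ^ (-((n:ℝ) + α) / 2))
                  * (N ^ qr * (ENNReal.ofReal lam) ^ (-qr)) :=
                mul_le_mul_right (distφ lam hlam) _
            _ = K * (ENNReal.ofReal lam) ^ (-qr) := by rw [hKdef, mul_assoc]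
      calc F x = ∫⁻ lam in Ioi (0:ℝ), ν {y | lam < |φ y|} := hlc
        _ ≤ ∫⁻ lam in Ioi (0:ℝ), min 1 (K * (ENNReal.ofReal lam) ^ (-qr)) :=
            setLIntegral_mono' measurableSet_Ioi hbound
        _ ≤ ENNReal.ofReal (qr/(qr-1)) * K ^ (1/qr) := minCalc hqr1 hKt
        _ = A * N := by
            rw [hKdef, ENNReal.mul_rpow_of_nonneg _ _ (by positivity),
              ← ENNReal.rpow_mul, mul_one_div_cancel hqr0.ne', ENNReal.rpow_one,
              ENNReal.ofReal_rpow_of_pos (by positivity), hA, ← mul_assoc,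
              ← ENNReal.ofReal_mul (div_nonneg (by linarith) (by linarith))]
            congr 2
            rw [Real.mul_rpow hD.le (Real.rpow_nonneg ht.le _), ← Real.rpow_mul ht.le,
              hBq, hAexp]
            ring
    -- the weak (q,q) distribution bound via truncation
    set Cq : ℝ := 2 * (qr/(qr-1)) ^ (1/qr) with hCq
    have hCqpos : 0 < Cq := by
      rw [hCq]
      exact mul_pos two_pos (Real.rpow_pos_of_pos (div_pos hqr0 (by linarith)) _)
    have step2 : ∀ lam : ℝ, 0 < lam →
        (wMeas n w) {x | ENNReal.ofReal lam < F x}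
          ≤ (ENNReal.ofReal Cq * N) ^ qr * (ENNReal.ofReal lam) ^ (-qr) := by
      intro lam hlam
      set s : ℝ := lam/2 with hsdef
      have hspos : 0 < s := by rw [hsdef]; linarith
      set E : Set (EuclideanSpace ℝ (Fin n)) := {y | s < |φ y|} with hEdef
      have hEm : MeasurableSet E := measurableSet_lt measurable_const hφ.abs
      set h : EuclideanSpace ℝ (Fin n) → ENNReal :=
        E.indicator (fun y => ENNReal.ofReal |φ y|) with hhdef
      have hhm : Measurable h := hφm.indicator hEm
      have hhlt : ∀ y, h y ≠ ⊤ := fun y =>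
        ne_top_of_le_ne_top ENNReal.ofReal_ne_top (Set.indicator_le_self _ _ y)
      set G : EuclideanSpace ℝ (Fin n) → ENNReal :=
        fun x => ∫⁻ y, ENNReal.ofReal (Γ x y t) * h y ∂(wMeas n w) with hGdef
      have hGum : Measurable (fun p : (EuclideanSpace ℝ (Fin n)) × (EuclideanSpace ℝ (Fin n)) =>
          ENNReal.ofReal (Γ p.1 p.2 t) * h p.2) := hΓum.mul (hhm.comp measurable_snd)
      have hGm : Measurable G := hGum.lintegral_prod_right'
      have hFG : ∀ x, F x ≤ G x + ENNReal.ofReal s := by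
        intro x
        have hspl : F x = (∫⁻ y in E, ENNReal.ofReal (Γ x y t) * ENNReal.ofReal |φ y| ∂(wMeas n w))
            + ∫⁻ y in Eᶜ, ENNReal.ofReal (Γ x y t) * ENNReal.ofReal |φ y| ∂(wMeas n w) := by
          rw [hFdef]; exact (lintegral_add_compl _ hEm).symm
        have h1 : (∫⁻ y in E, ENNReal.ofReal (Γ x y t) * ENNReal.ofReal |φ y| ∂(wMeas n w))
            = G x := by
          rw [hGdef, ← lintegral_indicator hEm]
          refine lintegral_congr fun y => ?_
          by_cases hy : y ∈ E
          · rw [Set.indicator_of_mem hy, hhdef, Set.indicator_of_mem hy]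
          · rw [Set.indicator_of_notMem hy, hhdef, Set.indicator_of_notMem hy, mul_zero]
        have h2 : (∫⁻ y in Eᶜ, ENNReal.ofReal (Γ x y t) * ENNReal.ofReal |φ y| ∂(wMeas n w))
            ≤ ENNReal.ofReal s := by
          calc (∫⁻ y in Eᶜ, ENNReal.ofReal (Γ x y t) * ENNReal.ofReal |φ y| ∂(wMeas n w))
              ≤ ∫⁻ y in Eᶜ, ENNReal.ofReal (Γ x y t) * ENNReal.ofReal s ∂(wMeas n w) := by
                refine setLIntegral_mono' hEm.compl fun y hy => ?_
                have hys : |φ y| ≤ s := not_lt.mp hy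
                exact mul_le_mul_right (ENNReal.ofReal_le_ofReal hys) _
            _ = (∫⁻ y in Eᶜ, ENNReal.ofReal (Γ x y t) ∂(wMeas n w)) * ENNReal.ofReal s :=
                lintegral_mul_const' _ _ ENNReal.ofReal_ne_top
            _ ≤ 1 * ENNReal.ofReal s :=
                mul_le_mul_left ((setLIntegral_le_lintegral _ _).trans (k1r x).le) _
            _ = ENNReal.ofReal s := one_mul _
        rw [hspl, h1]
        exact add_le_add_right h2 _
      have hsubG : {x | ENNReal.ofReal lam < F x} ⊆ {x | ENNReal.ofReal s ≤ G x} := by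
        intro x hx
        by_contra hxc
        have h1 : G x < ENNReal.ofReal s := not_le.mp hxc
        have h2 : F x < ENNReal.ofReal lam := by
          calc F x ≤ G x + ENNReal.ofReal s := hFG x
            _ < ENNReal.ofReal s + ENNReal.ofReal s :=
                ENNReal.add_lt_add_right ENNReal.ofReal_ne_top h1
            _ = ENNReal.ofReal lam := by
                rw [← ENNReal.ofReal_add hspos.le hspos.le, hsdef]
                norm_num
        exact absurd hx (not_lt.mpr h2.le)
      have cheb : ENNReal.ofReal s * (wMeas n w) {x | ENNReal.ofReal s ≤ G x}
          ≤ ∫⁻ x, G x ∂(wMeas n w) := mul_meas_ge_le_lintegral₀ hGm.aemeasurable _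
      have hswap : ∫⁻ x, G x ∂(wMeas n w) = ∫⁻ y, h y ∂(wMeas n w) := by
        rw [hGdef,
          lintegral_lintegral_swap hGum.aemeasurable]
        refine lintegral_congr fun y => ?_
        rw [lintegral_mul_const' _ _ (hhlt y), k1l y, one_mul]
      have hint : ∫⁻ y, h y ∂(wMeas n w)
          ≤ ENNReal.ofReal (qr/(qr-1) * s ^ (1-qr)) * N ^ qr := by
        have hind : ∀ y, h y = ENNReal.ofReal (E.indicator (fun y => |φ y|) y) := by
          intro y
          by_cases hy : y ∈ E
          · rw [hhdef, Set.indicator_of_mem hy, Set.indicator_of_mem hy]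
          · rw [hhdef, Set.indicator_of_notMem hy, Set.indicator_of_notMem hy,
              ENNReal.ofReal_zero]
        have hlc : ∫⁻ y, h y ∂(wMeas n w)
            = ∫⁻ u in Ioi (0:ℝ), (wMeas n w) {y | u < E.indicator (fun y => |φ y|) y} := by
          simp_rw [hind]
          exact lintegral_eq_lintegral_meas_lt _
            (Filter.Eventually.of_forall fun y =>
              Set.indicator_nonneg (fun _ _ => abs_nonneg _) y)
            ((hφ.abs.indicator hEm).aemeasurable)
        have hsetb : ∀ u : ℝ, 0 < u →
            (wMeas n w) {y | u < E.indicator (fun y => |φ y|) y}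
              ≤ N ^ qr * (ENNReal.ofReal (max s u)) ^ (-qr) := by
          intro u hu
          refine le_trans (measure_mono ?_) (distφ (max s u) (lt_max_of_lt_left hspos))
          intro y hy
          simp only [mem_setOf_eq] at hy ⊢
          by_cases hyE : y ∈ E
          · rw [Set.indicator_of_mem hyE] at hy
            exact max_lt hyE hy
          · rw [Set.indicator_of_notMem hyE] at hy
            exact absurd hy (not_lt.mpr hu.le)
        have hNqt : N ^ qr ≠ ⊤ := ENNReal.rpow_ne_top_of_nonneg (by linarith) hNt
        calc ∫⁻ y, h y ∂(wMeas n w)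
            = ∫⁻ u in Ioi (0:ℝ), (wMeas n w) {y | u < E.indicator (fun y => |φ y|) y} := hlc
          _ ≤ (∫⁻ u in Ioc (0:ℝ) s, (wMeas n w) {y | u < E.indicator (fun y => |φ y|) y})
              + ∫⁻ u in Ioi s, (wMeas n w) {y | u < E.indicator (fun y => |φ y|) y} := by
              rw [show (Ioi (0:ℝ)) = Ioc 0 s ∪ Ioi s from (Ioc_union_Ioi_eq_Ioi hspos.le).symm]
              exact lintegral_union_le _ _ _
          _ ≤ (∫⁻ _ in Ioc (0:ℝ) s, N ^ qr * (ENNReal.ofReal s) ^ (-qr))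
              + ∫⁻ u in Ioi s, N ^ qr * (ENNReal.ofReal u) ^ (-qr) := by
              refine add_le_add (setLIntegral_mono' measurableSet_Ioc fun u hu => ?_)
                (setLIntegral_mono' measurableSet_Ioi fun u hu => ?_)
              · calc (wMeas n w) {y | u < E.indicator (fun y => |φ y|) y}
                    ≤ N ^ qr * (ENNReal.ofReal (max s u)) ^ (-qr) := hsetb u hu.1
                  _ = N ^ qr * (ENNReal.ofReal s) ^ (-qr) := by rw [max_eq_left hu.2]
              · calc (wMeas n w) {y | u < E.indicator (fun y => |φ y|) y}
                    ≤ N ^ qr * (ENNReal.ofReal (max s u)) ^ (-qr) := hsetb u (hspos.trans hu)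
                  _ = N ^ qr * (ENNReal.ofReal u) ^ (-qr) := by rw [max_eq_right (le_of_lt hu)]
          _ = N ^ qr * ((ENNReal.ofReal s) ^ (-qr) * ENNReal.ofReal s)
              + N ^ qr * ENNReal.ofReal (s ^ (1-qr) / (qr-1)) := by
              rw [setLIntegral_const, Real.volume_Ioc, sub_zero,
                lintegral_const_mul' _ _ hNqt, rpowTail hqr1 hspos, mul_assoc]
          _ = ENNReal.ofReal (qr/(qr-1) * s ^ (1-qr)) * N ^ qr := by
              have hq1 : qr - 1 ≠ 0 := by linarith
              have e1 : (ENNReal.ofReal s) ^ (-qr) * ENNReal.ofReal s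
                  = ENNReal.ofReal (s ^ (1-qr)) := by
                rw [ENNReal.ofReal_rpow_of_pos hspos,
                  ← ENNReal.ofReal_mul (Real.rpow_nonneg hspos.le _)]
                congr 1
                rw [show s ^ (-qr) * s = s ^ (-qr) * s ^ (1:ℝ) by rw [Real.rpow_one],
                  ← Real.rpow_add hspos, show -qr + 1 = 1 - qr by ring]
              rw [e1, ← mul_add, ← ENNReal.ofReal_add (Real.rpow_nonneg hspos.le _)
                (div_nonneg (Real.rpow_nonneg hspos.le _) (by linarith)), mul_comm]
              congr 2
              field_simp
              ring
      have h0 : ENNReal.ofReal s ≠ 0 := (ENNReal.ofReal_pos.mpr hspos).ne'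
      calc (wMeas n w) {x | ENNReal.ofReal lam < F x}
          ≤ (wMeas n w) {x | ENNReal.ofReal s ≤ G x} := measure_mono hsubG
        _ = (ENNReal.ofReal s)⁻¹
            * (ENNReal.ofReal s * (wMeas n w) {x | ENNReal.ofReal s ≤ G x}) := by
            rw [← mul_assoc, ENNReal.inv_mul_cancel h0 ENNReal.ofReal_ne_top, one_mul]
        _ ≤ (ENNReal.ofReal s)⁻¹ * (ENNReal.ofReal (qr/(qr-1) * s ^ (1-qr)) * N ^ qr) :=
            mul_le_mul_right (cheb.trans (hswap ▸ hint)) _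
        _ = (ENNReal.ofReal Cq * N) ^ qr * (ENNReal.ofReal lam) ^ (-qr) := by
            have hq1 : qr - 1 ≠ 0 := by linarith
            have e0 : (ENNReal.ofReal s)⁻¹ = ENNReal.ofReal (s ^ (-(1:ℝ))) := by
              rw [← ENNReal.rpow_neg_one, ENNReal.ofReal_rpow_of_pos hspos]
            have eL : (ENNReal.ofReal s)⁻¹ * (ENNReal.ofReal (qr/(qr-1) * s ^ (1-qr)) * N ^ qr)
                = ENNReal.ofReal (s ^ (-(1:ℝ)) * (qr/(qr-1) * s ^ (1-qr))) * N ^ qr := by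
              rw [e0, ← mul_assoc, ← ENNReal.ofReal_mul (Real.rpow_nonneg hspos.le _)]
            have eR : (ENNReal.ofReal Cq * N) ^ qr * (ENNReal.ofReal lam) ^ (-qr)
                = ENNReal.ofReal (Cq ^ qr * lam ^ (-qr)) * N ^ qr := by
              rw [ENNReal.mul_rpow_of_nonneg _ _ (by linarith : (0:ℝ) ≤ qr),
                ENNReal.ofReal_rpow_of_pos hCqpos, ENNReal.ofReal_rpow_of_pos hlam,
                ENNReal.ofReal_mul (Real.rpow_nonneg hCqpos.le _)]
              ring
            rw [eL, eR]
            congr 1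
            have e2 : Cq ^ qr = 2 ^ qr * (qr/(qr-1)) := by
              rw [hCq, Real.mul_rpow (by norm_num) (Real.rpow_nonneg
                  (div_nonneg (by linarith) (by linarith)) _),
                ← Real.rpow_mul (div_nonneg (by linarith) (by linarith)),
                one_div_mul_cancel hqr0.ne', Real.rpow_one]
            have e3 : s ^ (-(1:ℝ)) * s ^ ((1:ℝ)-qr) = s ^ (-qr) := by
              rw [← Real.rpow_add hspos]
              congr 1
              ring
            have e4 : s ^ (-qr) = lam ^ (-qr) * 2 ^ qr := by
              rw [hsdef, Real.div_rpow hlam.le (by norm_num : (0:ℝ) ≤ 2),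
                Real.rpow_neg (by norm_num : (0:ℝ) ≤ 2), div_inv_eq_mul]
            rw [show s ^ (-(1:ℝ)) * (qr/(qr-1) * s ^ ((1:ℝ)-qr))
                = qr/(qr-1) * (s ^ (-(1:ℝ)) * s ^ ((1:ℝ)-qr)) by ring, e3, e4, e2]
            ring
    have hCqB : ∀ θ : ℝ, 0 ≤ θ → θ ≤ 1 → Cq ^ θ * Bq ^ (1-θ) ≤ cfun D q := by
      intro θ h0 h1
      rw [cfun, if_neg hqt]
      simp only [← hqrdef]
      rw [← hCq, ← hBq]
      exact mul_le_mul (rpow_le_max_one hCqpos h0 h1)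
        (rpow_le_max_one hBqpos (by linarith) (by linarith))
        (Real.rpow_nonneg hBqpos.le _) (le_trans zero_le_one (le_max_left _ _))
    rcases eq_or_ne r ⊤ with rfl | hrt
    · -- r = ⊤ : use the sup bound
      have hEe : -(((n:ℝ) + α) / 2) * (q⁻¹.toReal - (⊤:ENNReal)⁻¹.toReal) = Aexp := by
        rw [hAexp, hqrdef, ENNReal.toReal_inv, one_div]
        simp
      rw [weakNorm, if_pos rfl, hEe]
      have hSle : eLpNorm (Sop (wMeas n w) Γ φ t) ⊤ (wMeas n w) ≤ A * N := by
        rw [eLpNorm_exponent_top]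
        exact essSup_le_of_ae_le _ (Filter.Eventually.of_forall fun x => (hSF x).trans (supF x))
      refine hSle.trans (mul_le_mul_left ?_ N)
      rw [hA]
      refine ENNReal.ofReal_le_ofReal
        (mul_le_mul_of_nonneg_right ?_ (Real.rpow_nonneg ht.le _))
      have h2 := hCqB 0 le_rfl zero_le_one
      simpa using h2
    · -- r finite
      have hrr : qr ≤ r.toReal := by
        rw [hqrdef]
        exact (ENNReal.toReal_le_toReal hqt hrt).mpr hqr
      set rr := r.toReal with hrrdef
      have hrr1 : 1 < rr := lt_of_lt_of_le hqr1 hrr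
      set θ : ℝ := qr / rr with hθ
      have hθ0 : 0 < θ := div_pos hqr0 (by linarith)
      have hθ1 : θ ≤ 1 := (div_le_one (by linarith)).mpr hrr
      have h1rr : (0:ℝ) < 1/rr := one_div_pos.mpr (by linarith)
      have hEe : -(((n:ℝ) + α) / 2) * (q⁻¹.toReal - r⁻¹.toReal) = Aexp * (1-θ) := by
        have ha : q.toReal ≠ 0 := by rw [← hqrdef]; exact hqr0.ne'
        have hb : r.toReal ≠ 0 := by rw [← hrrdef]; linarith
        have hkey : (1/q.toReal) * (1 - q.toReal/r.toReal) = q.toReal⁻¹ - r.toReal⁻¹ := by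
          field_simp
        rw [hAexp, hθ, hqrdef, hrrdef, ENNReal.toReal_inv, ENNReal.toReal_inv, ← hkey]
        ring
      rw [weakNorm, if_neg hrt, hEe]
      simp only [← hrrdef]
      refine iSup₂_le fun lam hlam => ?_
      have hP : (wMeas n w) {x | lam < |Sop (wMeas n w) Γ φ t x|}
          ≤ (wMeas n w) {x | ENNReal.ofReal lam < F x} := measure_mono (hsub lam hlam)
      by_cases hc : ENNReal.ofReal lam < A * N
      · have hN0 : N ≠ 0 := fun hzero => by
          rw [hzero, mul_zero] at hc
          simp at hc
        calc ENNReal.ofReal lam * ((wMeas n w) {x | lam < |Sop (wMeas n w) Γ φ t x|}) ^ (1/rr)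
            ≤ ENNReal.ofReal lam * ((ENNReal.ofReal Cq * N) ^ qr
                * (ENNReal.ofReal lam) ^ (-qr)) ^ (1/rr) :=
              mul_le_mul_right
                (ENNReal.rpow_le_rpow (hP.trans (step2 lam hlam)) h1rr.le) _
          _ = (ENNReal.ofReal Cq * N) ^ θ * ((ENNReal.ofReal lam) ^ (1:ℝ)
                * (ENNReal.ofReal lam) ^ (-θ)) := by
              rw [ENNReal.mul_rpow_of_nonneg _ _ h1rr.le, ← ENNReal.rpow_mul,
                ← ENNReal.rpow_mul, mul_one_div, neg_mul, mul_one_div, ← hθ,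
                ENNReal.rpow_one]
              ring
          _ = (ENNReal.ofReal Cq * N) ^ θ * (ENNReal.ofReal lam) ^ (1-θ) := by
              rw [← ENNReal.rpow_add _ _ (ENNReal.ofReal_pos.mpr hlam).ne'
                ENNReal.ofReal_ne_top, show (1:ℝ) + -θ = 1 - θ by ring]
          _ ≤ (ENNReal.ofReal Cq * N) ^ θ * (A * N) ^ (1-θ) :=
              mul_le_mul_right (ENNReal.rpow_le_rpow hc.le (by linarith)) _
          _ = ((ENNReal.ofReal Cq) ^ θ * A ^ (1-θ)) * N := by
              rw [ENNReal.mul_rpow_of_nonneg _ _ hθ0.le,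
                ENNReal.mul_rpow_of_nonneg _ _ (by linarith : (0:ℝ) ≤ 1-θ)]
              have hNN : N ^ θ * N ^ (1-θ) = N := by
                rw [← ENNReal.rpow_add _ _ hN0 hNt, show θ + (1-θ) = (1:ℝ) by ring,
                  ENNReal.rpow_one]
              calc (ENNReal.ofReal Cq) ^ θ * N ^ θ * (A ^ (1-θ) * N ^ (1-θ))
                  = (ENNReal.ofReal Cq) ^ θ * A ^ (1-θ) * (N ^ θ * N ^ (1-θ)) := by ring
                _ = (ENNReal.ofReal Cq) ^ θ * A ^ (1-θ) * N := by rw [hNN]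
          _ ≤ ENNReal.ofReal (cfun D q * t ^ (Aexp * (1-θ))) * N := by
              refine mul_le_mul_left ?_ N
              rw [hA, ENNReal.ofReal_rpow_of_pos hCqpos, ENNReal.ofReal_rpow_of_pos hApos,
                ← ENNReal.ofReal_mul (Real.rpow_nonneg hCqpos.le _)]
              refine ENNReal.ofReal_le_ofReal ?_
              rw [Real.mul_rpow hBqpos.le (Real.rpow_nonneg ht.le _), ← Real.rpow_mul ht.le]
              calc Cq ^ θ * (Bq ^ (1-θ) * t ^ (Aexp * (1-θ)))
                  = (Cq ^ θ * Bq ^ (1-θ)) * t ^ (Aexp * (1-θ)) := by ring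
                _ ≤ cfun D q * t ^ (Aexp * (1-θ)) :=
                    mul_le_mul_of_nonneg_right (hCqB θ hθ0.le hθ1)
                      (Real.rpow_nonneg ht.le _)
      · have hP0 : (wMeas n w) {x | lam < |Sop (wMeas n w) Γ φ t x|} = 0 := by
          refine le_antisymm (hP.trans ?_) zero_le
          have hempty : {x | ENNReal.ofReal lam < F x} = ∅ :=
            eq_empty_iff_forall_notMem.mpr fun x hx => hc (lt_of_lt_of_le hx (supF x))
          rw [hempty, measure_empty]
        rw [hP0, ENNReal.zero_rpow_of_pos h1rr, mul_zero]
        exact zero_le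


lemma sb_mono {n : ℕ} {α : ℝ} {w : EuclideanSpace ℝ (Fin n) → ℝ}
    {Γ : EuclideanSpace ℝ (Fin n) → EuclideanSpace ℝ (Fin n) → ℝ → ℝ}
    {q : ENNReal} {c c' : ℝ} (h : c ≤ c')
    (hsb : SmoothingBound n α w Γ c q) : SmoothingBound n α w Γ c' q := by
  intro r hr φ hφ hN t ht
  refine (hsb r hr φ hφ hN t ht).trans (mul_le_mul_left (ENNReal.ofReal_le_ofReal
    (mul_le_mul_of_nonneg_right h (Real.rpow_nonneg ht.le _))) _)

lemma cfun_le {D ε : ℝ} (hD : 0 < D) (hε : 0 < ε) (q : ENNReal)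
    (hq : ENNReal.ofReal (1 + ε) < q) :
    cfun D q ≤ max 1 (2 * (1 + 1/ε)) * max 1 ((1 + 1/ε) * max 1 D) := by
  have h1ε : (0:ℝ) ≤ 1 + 1/ε := by
    have := one_div_pos.mpr hε
    linarith
  have hC1 : (1:ℝ) ≤ max 1 (2 * (1 + 1/ε)) := le_max_left _ _
  have hC2 : (1:ℝ) ≤ max 1 ((1 + 1/ε) * max 1 D) := le_max_left _ _
  rcases eq_or_ne q ⊤ with rfl | hqt
  · rw [cfun, if_pos rfl]
    calc (1:ℝ) = 1 * 1 := (one_mul 1).symm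
      _ ≤ _ := mul_le_mul hC1 hC2 zero_le_one (le_trans zero_le_one hC1)
  · rw [cfun, if_neg hqt]
    set a := q.toReal with ha
    have haε : 1 + ε < a := by
      have h1 : (ENNReal.ofReal (1+ε)).toReal < q.toReal :=
        (ENNReal.toReal_lt_toReal ENNReal.ofReal_ne_top hqt).mpr hq
      rwa [ENNReal.toReal_ofReal (by linarith)] at h1
    have ha1 : 1 < a := by linarith
    have ha0 : 0 < a - 1 := by linarith
    have hfrac : a/(a-1) ≤ 1 + 1/ε := by
      rw [div_le_iff₀ ha0]
      nlinarith [mul_lt_mul_of_pos_left (show ε < a - 1 by linarith) (one_div_pos.mpr hε),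
        (show (1/ε) * ε = 1 by field_simp)]
    have hfrac1 : 1 ≤ a/(a-1) := by
      rw [le_div_iff₀ ha0]; linarith
    have hinv1 : 1/a ≤ 1 := by
      rw [div_le_one (by linarith)]; linarith
    have hinv0 : (0:ℝ) ≤ 1/a := by positivity
    refine mul_le_mul (max_le_max le_rfl ?_) (max_le_max le_rfl ?_)
      (le_trans zero_le_one (le_max_left _ _)) (le_trans zero_le_one (le_max_left _ _))
    · refine mul_le_mul_of_nonneg_left ?_ (by norm_num)
      calc (a/(a-1)) ^ (1/a) ≤ (a/(a-1)) ^ (1:ℝ) :=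
            Real.rpow_le_rpow_of_exponent_le hfrac1 hinv1
        _ = a/(a-1) := Real.rpow_one _
        _ ≤ 1 + 1/ε := hfrac
    · exact mul_le_mul hfrac (rpow_le_max_one hD hinv0 hinv1)
        (Real.rpow_nonneg hD.le _) h1ε

end Stmt10Aux

/-- Lemma 2.5: in case (A) or (B), if `Γ ≥ 0` is measurable, satisfies (K1) and the
Gaussian upper bound `Γ(x,y,t) ≤ D t^{-(n+α)/2} exp(-|x-y|²/(Dt))`, then for every
`1 < q ≤ ∞` there is `c₂ > 0` (depending only on `q`, `n`, `α` and `D`) such that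
`‖S(t)φw‖_{L^{r,∞}(w)} ≤ c₂ t^{-((n+α)/2)(1/q-1/r)} ‖φ‖_{L^{q,∞}(w)}` for all `q ≤ r ≤ ∞`,
`φ ∈ L^{q,∞}(w)`, `t > 0`; moreover `c₂` can be chosen bounded for `q ∈ (1+ε, ∞]` for any
fixed `ε > 0`. -/
theorem stmt_10 (n : ℕ) (hn : 0 < n) (α : ℝ) (w : EuclideanSpace ℝ (Fin n) → ℝ)
    (hw : CaseAB n hn α w) (D : ℝ) (hD : 0 < D)
    (Γ : EuclideanSpace ℝ (Fin n) → EuclideanSpace ℝ (Fin n) → ℝ → ℝ)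
    (hmeas : Measurable (fun q : (EuclideanSpace ℝ (Fin n)) × (EuclideanSpace ℝ (Fin n)) × ℝ =>
      Γ q.1 q.2.1 q.2.2))
    (hΓ0 : ∀ x y t, 0 ≤ Γ x y t) (hK1 : PropK1 w Γ)
    (hΓD : ∀ (x y : EuclideanSpace ℝ (Fin n)) (t : ℝ), 0 < t →
      Γ x y t ≤ D * t ^ (-((n : ℝ) + α) / 2) * Real.exp (-‖x - y‖ ^ 2 / (D * t))) :
    (∀ q : ENNReal, 1 < q → ∃ c₂ : ℝ, 0 < c₂ ∧ SmoothingBound n α w Γ c₂ q) ∧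
    ∀ ε : ℝ, 0 < ε → ∃ c₂ : ℝ, 0 < c₂ ∧
      ∀ q : ENNReal, ENNReal.ofReal (1 + ε) < q → SmoothingBound n α w Γ c₂ q := by
  constructor
  · intro q hq
    exact ⟨Stmt10Aux.cfun D q, Stmt10Aux.cfun_pos D q,
      Stmt10Aux.main n hn α w hw D hD Γ hmeas hΓ0 hK1 hΓD q hq⟩
  · intro ε hε
    refine ⟨max 1 (2 * (1 + 1/ε)) * max 1 ((1 + 1/ε) * max 1 D), ?_, ?_⟩
    · have h1 : (1:ℝ) ≤ max 1 (2 * (1 + 1/ε)) := le_max_left _ _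
      have h2 : (1:ℝ) ≤ max 1 ((1 + 1/ε) * max 1 D) := le_max_left _ _
      nlinarith
    · intro q hq
      have hq1 : (1:ENNReal) < q :=
        lt_of_le_of_lt (ENNReal.one_le_ofReal.mpr (by linarith)) hq
      exact Stmt10Aux.sb_mono (Stmt10Aux.cfun_le hD hε q hq)
        (Stmt10Aux.main n hn α w hw D hD Γ hmeas hΓ0 hK1 hΓD q hq1)
end
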